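/- arXiv:2108.01399 — 2 statements merged into one kernel-verified Lean document; each statement's English description precedes it below -/
import Mathlib

section
/- If a Markushevich basis B is Δ-symmetric for largest coefficients and C_q-quasi-greedy, then B has Property (F) with constant 𝓕 ≤ 3C_qΔ. -/
open Finset

/-- A semi-normalized Markushevich basis of a real Banach space `X`. -/
structure MBasis (X : Type*) [NormedAddCommGroup X] [NormedSpace ℝ X] where
  e : ℕ → X
  coord : ℕ → X →L[ℝ] ℝ
  biorth : ∀ n m, coord n (e m) = if n = m then 1 else 0
  dense_span : (Submodule.span ℝ (Set.range e)).topologicalClosure = ⊤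
  total : ∀ f : X, (∀ n, coord n f = 0) → f = 0
  semiNormalized : ∃ c₁ c₂ : ℝ, 0 < c₁ ∧
    ∀ n, c₁ ≤ ‖e n‖ ∧ c₁ ≤ ‖coord n‖ ∧ ‖e n‖ ≤ c₂ ∧ ‖coord n‖ ≤ c₂

namespace MBasis

variable {X : Type*} [NormedAddCommGroup X] [NormedSpace ℝ X] (B : MBasis X)

/-- The support of a vector. -/
def supp (f : X) : Set ℕ := {n | B.coord n f ≠ 0}

/-- Finitely supported vectors. -/
def FinSupp (f : X) : Prop := (B.supp f).Finite

/-- Coordinate projection onto a finite set. -/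
noncomputable def P (A : Finset ℕ) (f : X) : X := ∑ n ∈ A, B.coord n f • B.e n

/-- Indicator sum `1_A`. -/
noncomputable def ind (A : Finset ℕ) : X := ∑ n ∈ A, B.e n

/-- Partial sum of order `k`. -/
noncomputable def S (k : ℕ) (f : X) : X := B.P (Finset.range k) f

/-- `A` is a greedy set for `f`. -/
def Greedy (f : X) (A : Finset ℕ) : Prop :=
  ∀ n ∈ A, ∀ m ∉ A, |B.coord m f| ≤ |B.coord n f|

/-- Quasi-greedy with constant `C`. -/
def QuasiGreedy (C : ℝ) : Prop :=
  ∀ f : X, ∀ A : Finset ℕ, B.Greedy f A → ‖f - B.P A f‖ ≤ C * ‖f‖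

/-- Democratic with constant `C`. -/
def Democratic (C : ℝ) : Prop :=
  ∀ A B' : Finset ℕ, A.card ≤ B'.card → ‖B.ind A‖ ≤ C * ‖B.ind B'‖

/-- Conservative with constant `C`. -/
def Conservative (C : ℝ) : Prop :=
  ∀ A B' : Finset ℕ, A.card ≤ B'.card → (∀ i ∈ A, ∀ j ∈ B', i < j) →
    ‖B.ind A‖ ≤ C * ‖B.ind B'‖

/-- Symmetric for largest coefficients with constant `C`. -/
def SLC (C : ℝ) : Prop :=
  ∀ (f : X) (A B' : Finset ℕ) (ε η : ℕ → ℝ),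
    A.card ≤ B'.card → Disjoint A B' →
    Disjoint (B.supp f) ((A ∪ B' : Finset ℕ) : Set ℕ) →
    (∀ n, |B.coord n f| ≤ 1) →
    (∀ n ∈ A, |ε n| = 1) → (∀ n ∈ B', |η n| = 1) →
    ‖f + ∑ n ∈ A, ε n • B.e n‖ ≤ C * ‖f + ∑ n ∈ B', η n • B.e n‖

/-- Almost-greedy with constant `C`. -/
def AlmostGreedy (C : ℝ) : Prop :=
  ∀ f : X, ∀ A : Finset ℕ, B.Greedy f A →
    ∀ B' : Finset ℕ, B'.card ≤ A.card → ‖f - B.P A f‖ ≤ C * ‖f - B.P B' f‖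

/-- Partially-greedy with constant `C`. -/
def PartiallyGreedy (C : ℝ) : Prop :=
  ∀ f : X, ∀ A : Finset ℕ, B.Greedy f A →
    ∀ k ≤ A.card, ‖f - B.P A f‖ ≤ C * ‖f - B.S k f‖

/-- Property (F) with constant `C`. -/
def PropF (C : ℝ) : Prop :=
  ∀ (f g : X) (A B' : Finset ℕ),
    B.FinSupp f → B.FinSupp g → Disjoint (B.supp f) (B.supp g) →
    A.card ≤ B'.card → Disjoint A B' →
    Disjoint (B.supp (f + g)) ((A ∪ B' : Finset ℕ) : Set ℕ) →
    (∀ n, |B.coord n f| ≤ 1) →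
    (∀ m n, B.coord n g ≠ 0 → |B.coord m f| ≤ |B.coord n g|) →
    ‖f + B.ind A‖ ≤ C * ‖f + g + B.ind B'‖

/-- Property (F_p) with constant `C` (extra condition `A < supp(g) ∪ B`). -/
def PropFp (C : ℝ) : Prop :=
  ∀ (f g : X) (A B' : Finset ℕ),
    B.FinSupp f → B.FinSupp g → Disjoint (B.supp f) (B.supp g) →
    A.card ≤ B'.card → Disjoint A B' →
    Disjoint (B.supp (f + g)) ((A ∪ B' : Finset ℕ) : Set ℕ) →
    (∀ n, |B.coord n f| ≤ 1) →
    (∀ m n, B.coord n g ≠ 0 → |B.coord m f| ≤ |B.coord n g|) →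
    (∀ i ∈ A, (∀ j ∈ B.supp g, i < j) ∧ (∀ j ∈ B', i < j)) →
    ‖f + B.ind A‖ ≤ C * ‖f + g + B.ind B'‖

/-- The set of coordinates of `y` with coefficient of modulus one. -/
def unitSet (y : X) : Set ℕ := {n | B.coord n y ≠ 0 ∧ |B.coord n y| = 1}

/-- Property (F*) with constant `C`. -/
def PropFStar (C : ℝ) : Prop :=
  ∀ f z y : X,
    B.FinSupp f → B.FinSupp z → B.FinSupp y →
    Disjoint (B.supp f) (B.supp z) → Disjoint (B.supp f) (B.supp y) →
    Disjoint (B.supp z) (B.supp y) →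
    (∀ n, |B.coord n f| ≤ 1) → (∀ n, |B.coord n z| ≤ 1) →
    (B.supp z).ncard ≤ (B.unitSet y).ncard →
    (∀ m n, B.coord n y ≠ 0 → |B.coord m f| ≤ |B.coord n y|) →
    ‖f + z‖ ≤ C * ‖f + y‖

/-- Property (F*_p) with constant `C` (extra condition `supp z < supp (f + y)`). -/
def PropFStarP (C : ℝ) : Prop :=
  ∀ f z y : X,
    B.FinSupp f → B.FinSupp z → B.FinSupp y →
    Disjoint (B.supp f) (B.supp z) → Disjoint (B.supp f) (B.supp y) →
    Disjoint (B.supp z) (B.supp y) →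
    (∀ n, |B.coord n f| ≤ 1) → (∀ n, |B.coord n z| ≤ 1) →
    (B.supp z).ncard ≤ (B.unitSet y).ncard →
    (∀ m n, B.coord n y ≠ 0 → |B.coord m f| ≤ |B.coord n y|) →
    (∀ i ∈ B.supp z, ∀ j ∈ B.supp (f + y), i < j) →
    ‖f + z‖ ≤ C * ‖f + y‖

end MBasis

section Aux

variable {X : Type*} [NormedAddCommGroup X] [NormedSpace ℝ X] (B : MBasis X)

lemma MBasis.mem_supp_iff (x : X) (n : ℕ) : n ∈ B.supp x ↔ B.coord n x ≠ 0 := Iff.rfl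

lemma MBasis.coord_ind (A : Finset ℕ) (m : ℕ) :
    B.coord m (B.ind A) = if m ∈ A then 1 else 0 := by
  simp only [MBasis.ind, map_sum, B.biorth]
  exact Finset.sum_ite_eq A m fun _ => (1 : ℝ)

lemma MBasis.coord_P (A : Finset ℕ) (x : X) (m : ℕ) :
    B.coord m (B.P A x) = if m ∈ A then B.coord m x else 0 := by
  simp only [MBasis.P, map_sum, map_smul, B.biorth, smul_eq_mul, mul_ite, mul_one, mul_zero]
  exact Finset.sum_ite_eq A m fun n => B.coord n x

lemma MBasis.eq_of_coord_eq {x y : X} (hc : ∀ n, B.coord n x = B.coord n y) : x = y :=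
  sub_eq_zero.mp (B.total (x - y) fun n => by rw [map_sub, hc, sub_self])

lemma MBasis.e_ne_zero (n : ℕ) : B.e n ≠ 0 := by
  intro h0
  have hb := B.biorth n n
  rw [h0] at hb
  simp at hb

lemma MBasis.quasiGreedy_one_le {Cq : ℝ} (hq : B.QuasiGreedy Cq) : 1 ≤ Cq := by
  have h := hq (B.e 0) ∅ (fun n hn => absurd hn (Finset.notMem_empty n))
  simp [MBasis.P] at h
  have hp : 0 < ‖B.e 0‖ := norm_pos_iff.mpr (B.e_ne_zero 0)
  nlinarith

lemma MBasis.slc_pos {Δ : ℝ} (hs : B.SLC Δ) : 0 < Δ := by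
  have h := hs 0 {0} {1} (fun _ => 1) (fun _ => 1) (by simp) (by simp)
    (by simp [MBasis.supp]) (by simp) (by simp) (by simp)
  simp only [zero_add, Finset.sum_singleton, one_smul] at h
  have hp : 0 < ‖B.e 0‖ := norm_pos_iff.mpr (B.e_ne_zero 0)
  nlinarith [norm_nonneg (B.e 1)]

lemma sign_smul_eq' {a : ℝ} (ha : a ≠ 0) (x : X) :
    Real.sign a • x = |a|⁻¹ • (a • x) := by
  rw [smul_smul]
  congr 1
  rcases ha.lt_or_gt with hlt | hlt
  · rw [Real.sign_of_neg hlt, abs_of_neg hlt, inv_neg, neg_mul, inv_mul_cancel₀ ha]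
  · rw [Real.sign_of_pos hlt, abs_of_pos hlt, inv_mul_cancel₀ ha]

lemma MBasis.norm_P_sub (h : X) {Cq : ℝ} (hq : B.QuasiGreedy Cq) {Λ T : Finset ℕ}
    (hT : T ⊆ Λ) (hgΛ : B.Greedy h Λ) (hgs : B.Greedy h (Λ \ T)) :
    ‖B.P T h‖ ≤ 2 * Cq * ‖h‖ := by
  have e1 := hq h (Λ \ T) hgs
  have e2 := hq h Λ hgΛ
  have hsplit : B.P (Λ \ T) h + B.P T h = B.P Λ h := Finset.sum_sdiff hT
  have key : B.P T h = (h - B.P (Λ \ T) h) - (h - B.P Λ h) := by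
    rw [← hsplit]; abel
  rw [key]
  calc ‖(h - B.P (Λ \ T) h) - (h - B.P Λ h)‖
      ≤ ‖h - B.P (Λ \ T) h‖ + ‖h - B.P Λ h‖ := norm_sub_le _ _
    _ ≤ 2 * Cq * ‖h‖ := by linarith

lemma MBasis.trunc_aux {Cq : ℝ} (hq : B.QuasiGreedy Cq) (h : X) (Λ : Finset ℕ)
    (hgΛ : B.Greedy h Λ) (h1 : ∀ n ∈ Λ, 1 ≤ |B.coord n h|) :
    ∀ T : Finset ℕ, ∀ hne : T.Nonempty, T ⊆ Λ →
      (∀ n ∈ T, ∀ m ∈ Λ, m ∉ T → |B.coord n h| ≤ |B.coord m h|) →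
      ‖(∑ n ∈ T, Real.sign (B.coord n h) • B.e n)
          - (T.sup' hne fun n => |B.coord n h|)⁻¹ • B.P T h‖
        ≤ ((T.inf' hne fun n => |B.coord n h|)⁻¹
            - (T.sup' hne fun n => |B.coord n h|)⁻¹) * (2 * Cq * ‖h‖) := by
  have h2Cq : 0 ≤ 2 * Cq * ‖h‖ := by
    have h0 := hq h ∅ (fun n hn => absurd hn (Finset.notMem_empty n))
    simp [MBasis.P] at h0
    nlinarith [norm_nonneg h]
  intro T
  induction T using Finset.strongInduction with
  | _ T ih =>
  intro hne hTΛ hlow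
  obtain ⟨j, hjT, hjsup⟩ := Finset.exists_mem_eq_sup' hne (fun n => |B.coord n h|)
  have hj1 : 1 ≤ |B.coord j h| := h1 j (hTΛ hjT)
  have hjne : B.coord j h ≠ 0 := by
    intro h0
    rw [h0] at hj1
    norm_num at hj1
  have hsj := sign_smul_eq' hjne (B.e j)
  rcases Finset.eq_empty_or_nonempty (T.erase j) with hT'e | hne'
  · have hTj : T = {j} := by
      rcases (Finset.erase_eq_empty_iff T j).mp hT'e with h' | h'
      · exact absurd h' (Finset.nonempty_iff_ne_empty.mp hne)
      · exact h'
    subst hTj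
    simp only [Finset.sum_singleton, Finset.sup'_singleton, Finset.inf'_singleton, MBasis.P]
    rw [hsj]
    simp
  · have hT'Λ : T.erase j ⊆ Λ := (Finset.erase_subset j T).trans hTΛ
    have hjmax : ∀ n ∈ T, |B.coord n h| ≤ |B.coord j h| := by
      intro n hn
      have := Finset.le_sup' (fun n => |B.coord n h|) hn
      rw [hjsup] at this
      exact this
    have hlow' : ∀ n ∈ T.erase j, ∀ m ∈ Λ, m ∉ T.erase j → |B.coord n h| ≤ |B.coord m h| := by
      intro n hn m hm hmn
      by_cases hmT : m ∈ T
      · have hmj : m = j := by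
          by_contra hne2
          exact hmn (Finset.mem_erase.mpr ⟨hne2, hmT⟩)
        subst hmj
        exact hjmax n (Finset.mem_of_mem_erase hn)
      · exact hlow n (Finset.mem_of_mem_erase hn) m hm hmT
    have IH := ih (T.erase j) (Finset.erase_ssubset hjT) hne' hT'Λ hlow'
    set M := T.sup' hne (fun n => |B.coord n h|) with hMdef
    set M' := (T.erase j).sup' hne' (fun n => |B.coord n h|) with hM'def
    set μ := T.inf' hne (fun n => |B.coord n h|) with hμdef
    set μ' := (T.erase j).inf' hne' (fun n => |B.coord n h|) with hμ'def
    have h1μ : 1 ≤ μ := Finset.le_inf' hne _ fun n hn => h1 n (hTΛ hn)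
    have h1μ' : 1 ≤ μ' := Finset.le_inf' hne' _ fun n hn => h1 n (hT'Λ hn)
    have hμμ' : μ ≤ μ' :=
      Finset.le_inf' hne' _ fun n hn => Finset.inf'_le _ (Finset.mem_of_mem_erase hn)
    have hM'M : M' ≤ M := by
      apply Finset.sup'_le hne' _ fun n hn => ?_
      have := hjmax n (Finset.mem_of_mem_erase hn)
      rw [← hjsup] at this
      exact this
    have hμ'M' : μ' ≤ M' := by
      rw [hμ'def, hM'def]
      obtain ⟨n0, hn0⟩ := hne'
      exact le_trans (Finset.inf'_le (fun n => |B.coord n h|) hn0)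
        (Finset.le_sup' (fun n => |B.coord n h|) hn0)
    have hM'pos : (0:ℝ) < M' := by linarith
    have hMpos : (0:ℝ) < M := by linarith
    have hμpos : (0:ℝ) < μ := by linarith
    have hμ'pos : (0:ℝ) < μ' := by linarith
    have hsumT : (∑ n ∈ T, Real.sign (B.coord n h) • B.e n)
        = (∑ n ∈ T.erase j, Real.sign (B.coord n h) • B.e n)
          + Real.sign (B.coord j h) • B.e j :=
      (Finset.sum_erase_add T _ hjT).symm
    have hPT : B.P T h = B.P (T.erase j) h + B.coord j h • B.e j := by
      simp only [MBasis.P]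
      exact (Finset.sum_erase_add T _ hjT).symm
    have key : (∑ n ∈ T, Real.sign (B.coord n h) • B.e n) - M⁻¹ • B.P T h
        = ((∑ n ∈ T.erase j, Real.sign (B.coord n h) • B.e n) - M'⁻¹ • B.P (T.erase j) h)
          + (M'⁻¹ - M⁻¹) • B.P (T.erase j) h := by
      rw [hsumT, hPT, hjsup, hsj]
      module
    have hgsd : B.Greedy h (Λ \ T.erase j) := by
      intro n hn m hm
      rcases Finset.mem_sdiff.mp hn with ⟨hnΛ, hnT'⟩
      by_cases hmΛ : m ∈ Λ
      · have hmT' : m ∈ T.erase j := by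
          by_contra hmT'
          exact hm (Finset.mem_sdiff.mpr ⟨hmΛ, hmT'⟩)
        exact hlow' m hmT' n hnΛ hnT'
      · exact hgΛ n hnΛ m hmΛ
    have hPT'norm : ‖B.P (T.erase j) h‖ ≤ 2 * Cq * ‖h‖ := B.norm_P_sub h hq hT'Λ hgΛ hgsd
    have hinvMM' : M⁻¹ ≤ M'⁻¹ := by gcongr
    have hinvμμ' : μ'⁻¹ ≤ μ⁻¹ := by gcongr
    rw [key]
    calc ‖((∑ n ∈ T.erase j, Real.sign (B.coord n h) • B.e n)
            - M'⁻¹ • B.P (T.erase j) h) + (M'⁻¹ - M⁻¹) • B.P (T.erase j) h‖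
        ≤ ‖(∑ n ∈ T.erase j, Real.sign (B.coord n h) • B.e n)
            - M'⁻¹ • B.P (T.erase j) h‖ + ‖(M'⁻¹ - M⁻¹) • B.P (T.erase j) h‖ :=
          norm_add_le _ _
      _ ≤ (μ'⁻¹ - M'⁻¹) * (2 * Cq * ‖h‖) + (M'⁻¹ - M⁻¹) * (2 * Cq * ‖h‖) := by
          apply add_le_add IH
          rw [norm_smul, Real.norm_eq_abs, abs_of_nonneg (by linarith)]
          exact mul_le_mul_of_nonneg_left hPT'norm (by linarith)
      _ = (μ'⁻¹ - M⁻¹) * (2 * Cq * ‖h‖) := by ring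
      _ ≤ (μ⁻¹ - M⁻¹) * (2 * Cq * ‖h‖) := by nlinarith

lemma MBasis.trunc {Cq : ℝ} (hq : B.QuasiGreedy Cq) (hCq : 1 ≤ Cq) (h : X) (Λ : Finset ℕ)
    (hgΛ : B.Greedy h Λ) (h1 : ∀ n ∈ Λ, 1 ≤ |B.coord n h|) :
    ‖∑ n ∈ Λ, Real.sign (B.coord n h) • B.e n‖ ≤ 2 * Cq * ‖h‖ := by
  have hCq0 : (0:ℝ) < Cq := by linarith
  rcases Finset.eq_empty_or_nonempty Λ with hΛe | hne
  · subst hΛe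
    simp only [Finset.sum_empty, norm_zero]
    positivity
  · have aux := B.trunc_aux hq h Λ hgΛ h1 Λ hne subset_rfl
      (fun n _ m hm hmn => absurd hm hmn)
    set M := Λ.sup' hne (fun n => |B.coord n h|) with hMdef
    set μ := Λ.inf' hne (fun n => |B.coord n h|) with hμdef
    have h1μ : 1 ≤ μ := Finset.le_inf' hne _ fun n hn => h1 n hn
    have hμM : μ ≤ M := by
      rw [hμdef, hMdef]
      obtain ⟨n0, hn0⟩ := hne
      exact le_trans (Finset.inf'_le (fun n => |B.coord n h|) hn0)
        (Finset.le_sup' (fun n => |B.coord n h|) hn0)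
    have hMpos : (0:ℝ) < M := by linarith
    have hμpos : (0:ℝ) < μ := by linarith
    have hPnorm : ‖B.P Λ h‖ ≤ (1 + Cq) * ‖h‖ := by
      have e2 := hq h Λ hgΛ
      have key : B.P Λ h = h - (h - B.P Λ h) := by abel
      rw [key]
      calc ‖h - (h - B.P Λ h)‖ ≤ ‖h‖ + ‖h - B.P Λ h‖ := norm_sub_le _ _
        _ ≤ (1 + Cq) * ‖h‖ := by linarith
    have hsplit : (∑ n ∈ Λ, Real.sign (B.coord n h) • B.e n)
        = ((∑ n ∈ Λ, Real.sign (B.coord n h) • B.e n) - M⁻¹ • B.P Λ h)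
          + M⁻¹ • B.P Λ h := by abel
    rw [hsplit]
    have hsm : ‖M⁻¹ • B.P Λ h‖ ≤ M⁻¹ * ((1 + Cq) * ‖h‖) := by
      rw [norm_smul, Real.norm_eq_abs, abs_of_nonneg (by positivity)]
      exact mul_le_mul_of_nonneg_left hPnorm (by positivity)
    have hinvμ : μ⁻¹ ≤ 1 := by
      rw [inv_le_one_iff₀]
      right; exact h1μ
    have hinvMμ : M⁻¹ ≤ μ⁻¹ := by gcongr
    have hMinv0 : (0:ℝ) ≤ M⁻¹ := by positivity
    calc ‖((∑ n ∈ Λ, Real.sign (B.coord n h) • B.e n) - M⁻¹ • B.P Λ h) + M⁻¹ • B.P Λ h‖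
        ≤ ‖(∑ n ∈ Λ, Real.sign (B.coord n h) • B.e n) - M⁻¹ • B.P Λ h‖
          + ‖M⁻¹ • B.P Λ h‖ := norm_add_le _ _
      _ ≤ (μ⁻¹ - M⁻¹) * (2 * Cq * ‖h‖) + M⁻¹ * ((1 + Cq) * ‖h‖) := add_le_add aux hsm
      _ ≤ 2 * Cq * ‖h‖ := by
          nlinarith [mul_le_mul_of_nonneg_right hinvμ (by positivity : (0:ℝ) ≤ 2 * Cq * ‖h‖),
            mul_nonneg (mul_nonneg hMinv0 (by linarith : (0:ℝ) ≤ Cq - 1)) (norm_nonneg h)]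

end Aux


/-- If the basis is `Δ`-symmetric for largest coefficients and `C_q`-quasi-greedy, then it has
Property (F) with constant `𝓕 ≤ 3 C_q Δ`. -/
theorem slc_quasiGreedy_implies_propF
    {X : Type*} [NormedAddCommGroup X] [NormedSpace ℝ X] [CompleteSpace X]
    (B : MBasis X) (Δ Cq : ℝ) (hs : B.SLC Δ) (hq : B.QuasiGreedy Cq) :
    B.PropF (3 * Cq * Δ) := by
  classical
  intro f g A B' hff hfgfin hdisjfg hcard hAB hsuppAB hf1 hdom
  have hCq1 : 1 ≤ Cq := B.quasiGreedy_one_le hq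
  have hΔ : 0 < Δ := B.slc_pos hs
  set h := f + g + B.ind B' with hh
  have hcoordh : ∀ m, B.coord m h = B.coord m f + B.coord m g + (if m ∈ B' then 1 else 0) := by
    intro m
    rw [hh, map_add, map_add, B.coord_ind]
  have hgf0 : ∀ n, B.coord n g ≠ 0 → B.coord n f = 0 := by
    intro n hg0
    by_contra hf0
    exact Set.disjoint_left.mp hdisjfg ((B.mem_supp_iff f n).mpr hf0)
      ((B.mem_supp_iff g n).mpr hg0)
  have hfg0 : ∀ n, B.coord n f ≠ 0 → B.coord n g = 0 := by
    intro n hf0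
    by_contra hg0
    exact hf0 (hgf0 n hg0)
  have hAB'0 : ∀ n ∈ A ∪ B', B.coord n f = 0 ∧ B.coord n g = 0 := by
    intro n hn
    have hnotin : n ∉ B.supp (f + g) := by
      intro hmem
      exact Set.disjoint_left.mp hsuppAB hmem (Finset.mem_coe.mpr hn)
    have hsum0 : B.coord n (f + g) = 0 := by
      by_contra h0
      exact hnotin ((B.mem_supp_iff (f + g) n).mpr h0)
    constructor
    · by_contra hf0
      have := hfg0 n hf0
      rw [map_add, this, add_zero] at hsum0
      exact hf0 hsum0
    · by_contra hg0
      have := hgf0 n hg0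
      rw [map_add, this, zero_add] at hsum0
      exact hg0 hsum0
  set G := hfgfin.toFinset with hG
  have hGmem : ∀ n, n ∈ G ↔ B.coord n g ≠ 0 := by
    intro n
    show n ∈ Set.Finite.toFinset (s := B.supp g) hfgfin ↔ _
    refine (Set.Finite.mem_toFinset (s := B.supp g) (hs := hfgfin)).trans ?_
    exact Iff.rfl
  set Λ := G ∪ B' with hΛdef
  have hcB' : ∀ n ∈ B', B.coord n h = 1 := by
    intro n hn
    obtain ⟨h1, h2⟩ := hAB'0 n (Finset.mem_union_right _ hn)
    rw [hcoordh, h1, h2, if_pos hn]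
    ring
  have hGnB' : ∀ n, B.coord n g ≠ 0 → n ∉ B' := by
    intro n h0 hn
    exact h0 (hAB'0 n (Finset.mem_union_right _ hn)).2
  have hcG : ∀ n, B.coord n g ≠ 0 → B.coord n h = B.coord n g := by
    intro n h0
    rw [hcoordh, hgf0 n h0, if_neg (hGnB' n h0)]
    ring
  have hcout : ∀ m, m ∉ Λ → B.coord m h = B.coord m f := by
    intro m hm
    rw [hΛdef, Finset.mem_union, not_or] at hm
    have hg0 : B.coord m g = 0 := by
      by_contra h0
      exact hm.1 ((hGmem m).mpr h0)
    rw [hcoordh, hg0, if_neg hm.2]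
    ring
  have hgreedyΛ : B.Greedy h Λ := by
    intro n hn m hm
    rw [hcout m hm]
    rcases Finset.mem_union.mp hn with hnG | hnB
    · rw [hcG n ((hGmem n).mp hnG)]
      exact hdom m n ((hGmem n).mp hnG)
    · rw [hcB' n hnB]
      simpa using hf1 m
  have hfPΛ : h - B.P Λ h = f := by
    apply B.eq_of_coord_eq
    intro m
    rw [map_sub, B.coord_P]
    by_cases hm : m ∈ Λ
    · rw [if_pos hm, sub_self]
      symm
      rcases Finset.mem_union.mp hm with hmG | hmB
      · exact hgf0 m ((hGmem m).mp hmG)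
      · exact (hAB'0 m (Finset.mem_union_right _ hmB)).1
    · rw [if_neg hm, sub_zero, hcout m hm]
  have hfnorm : ‖f‖ ≤ Cq * ‖h‖ := by
    have := hq h Λ hgreedyΛ
    rw [hfPΛ] at this
    exact this
  set Λ' := Λ.filter (fun n => 1 ≤ |B.coord n h|) with hΛ'def
  have hB'Λ' : B' ⊆ Λ' := by
    intro n hn
    refine Finset.mem_filter.mpr ⟨Finset.mem_union_right _ hn, ?_⟩
    rw [hcB' n hn]
    norm_num
  have h1Λ' : ∀ n ∈ Λ', 1 ≤ |B.coord n h| := fun n hn => (Finset.mem_filter.mp hn).2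
  have hgreedyΛ' : B.Greedy h Λ' := by
    intro n hn m hm
    have hn1 := h1Λ' n hn
    by_cases hmΛ : m ∈ Λ
    · have hlt : ¬(1 ≤ |B.coord m h|) := fun hc => hm (Finset.mem_filter.mpr ⟨hmΛ, hc⟩)
      push_neg at hlt
      linarith
    · rw [hcout m hmΛ]
      exact le_trans (hf1 m) hn1
  have hdisjAΛ' : Disjoint A Λ' := by
    rw [Finset.disjoint_left]
    intro n hnA hnΛ'
    rcases Finset.mem_union.mp (Finset.mem_filter.mp hnΛ').1 with hnG | hnB
    · exact ((hGmem n).mp hnG) (hAB'0 n (Finset.mem_union_left _ hnA)).2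
    · exact Finset.disjoint_left.mp hAB hnA hnB
  have hsuppfd : Disjoint (B.supp f) ((A ∪ Λ' : Finset ℕ) : Set ℕ) := by
    rw [Set.disjoint_left]
    intro n hn hmem
    have hf0 : B.coord n f ≠ 0 := (B.mem_supp_iff f n).mp hn
    rcases Finset.mem_union.mp (Finset.mem_coe.mp hmem) with hnA | hnΛ'
    · exact hf0 (hAB'0 n (Finset.mem_union_left _ hnA)).1
    · rcases Finset.mem_union.mp (Finset.mem_filter.mp hnΛ').1 with hnG | hnB
      · exact ((hGmem n).mp hnG) (hfg0 n hf0)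
      · exact hf0 (hAB'0 n (Finset.mem_union_right _ hnB)).1
  have hslc := hs f A Λ' (fun _ => 1) (fun n => Real.sign (B.coord n h))
    (hcard.trans (Finset.card_le_card hB'Λ')) hdisjAΛ' hsuppfd hf1
    (fun n _ => by norm_num)
    (fun n hn => by
      have h1n := h1Λ' n hn
      have hne0 : B.coord n h ≠ 0 := by
        intro h0
        rw [h0] at h1n
        norm_num at h1n
      show |Real.sign (B.coord n h)| = 1
      rcases hne0.lt_or_gt with hlt | hlt
      · rw [Real.sign_of_neg hlt]; norm_num
      · rw [Real.sign_of_pos hlt]; norm_num)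
  have htr : ‖∑ n ∈ Λ', Real.sign (B.coord n h) • B.e n‖ ≤ 2 * Cq * ‖h‖ :=
    B.trunc hq hCq1 h Λ' hgreedyΛ' h1Λ'
  have hlhs : B.ind A = ∑ n ∈ A, (1:ℝ) • B.e n := by
    simp [MBasis.ind]
  have hrhs : ‖f + ∑ n ∈ Λ', Real.sign (B.coord n h) • B.e n‖ ≤ 3 * Cq * ‖h‖ := by
    calc ‖f + ∑ n ∈ Λ', Real.sign (B.coord n h) • B.e n‖
        ≤ ‖f‖ + ‖∑ n ∈ Λ', Real.sign (B.coord n h) • B.e n‖ := norm_add_le _ _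
      _ ≤ Cq * ‖h‖ + 2 * Cq * ‖h‖ := add_le_add hfnorm htr
      _ = 3 * Cq * ‖h‖ := by ring
  calc ‖f + B.ind A‖ = ‖f + ∑ n ∈ A, (1:ℝ) • B.e n‖ := by rw [hlhs]
    _ ≤ Δ * ‖f + ∑ n ∈ Λ', Real.sign (B.coord n h) • B.e n‖ := hslc
    _ ≤ Δ * (3 * Cq * ‖h‖) := mul_le_mul_of_nonneg_left hrhs hΔ.le
    _ = 3 * Cq * Δ * ‖h‖ := by ring
end

section
/- A Markushevich basis B has Property (F) if and only if it has Property (F*), with constants satisfying 𝓕 ≤ 𝓕* ≤ 5𝓕(1 + 2𝓕 + 8𝓕²). -/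
open Finset

namespace MBasis

variable {X : Type*} [NormedAddCommGroup X] [NormedSpace ℝ X] (B : MBasis X)

section Aux
variable {X : Type*} [NormedAddCommGroup X] [NormedSpace ℝ X] (B : MBasis X)

lemma coord_ind_s8 (A : Finset ℕ) (n : ℕ) :
    B.coord n (B.ind A) = if n ∈ A then 1 else 0 := by
  unfold ind
  rw [map_sum]
  simp_rw [B.biorth]
  exact Finset.sum_ite_eq A n (fun _ => 1)

lemma supp_ind (A : Finset ℕ) : B.supp (B.ind A) = ↑A := by
  ext n; simp [supp, coord_ind_s8]

lemma finSupp_ind (A : Finset ℕ) : B.FinSupp (B.ind A) := by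
  rw [FinSupp, supp_ind]; exact A.finite_toSet

lemma supp_zero : B.supp (0 : X) = ∅ := by ext n; simp [supp]

lemma finSupp_zero : B.FinSupp (0 : X) := by rw [FinSupp, supp_zero]; exact Set.finite_empty

lemma supp_neg (f : X) : B.supp (-f) = B.supp f := by ext n; simp [supp]

lemma supp_add_subset (f g : X) : B.supp (f + g) ⊆ B.supp f ∪ B.supp g := by
  intro n hn
  simp only [supp, Set.mem_setOf_eq, map_add, Set.mem_union] at *
  by_contra h
  push_neg at h
  simp [h.1, h.2] at hn

lemma apply_F {F : ℝ} (hF : B.PropF F) (f y : X)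
    (hf : B.FinSupp f) (hy : B.FinSupp y)
    (hdisj : Disjoint (B.supp f) (B.supp y))
    (hf1 : ∀ n, |B.coord n f| ≤ 1)
    (hdom : ∀ m n, B.coord n y ≠ 0 → |B.coord m f| ≤ |B.coord n y|)
    (A' B' : Finset ℕ)
    (hA'f : Disjoint (↑A' : Set ℕ) (B.supp f))
    (hA'y : Disjoint (↑A' : Set ℕ) (B.supp y))
    (hcard : A'.card ≤ B'.card)
    (hB'1 : ∀ n ∈ B', B.coord n y = 1) :
    ‖f + B.ind A'‖ ≤ F * ‖f + y‖ := by
  set g := y - B.ind B' with hg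
  have hcg : ∀ n, B.coord n g = B.coord n y - (if n ∈ B' then 1 else 0) := by
    intro n; rw [hg, map_sub, coord_ind_s8]
  have hgy : ∀ n, B.coord n g ≠ 0 → (n ∉ B' ∧ B.coord n g = B.coord n y) := by
    intro n hn
    by_cases h : n ∈ B'
    · exact absurd (by rw [hcg]; simp [h, hB'1 n h]) hn
    · exact ⟨h, by rw [hcg]; simp [h]⟩
  have hsg : B.supp g ⊆ B.supp y := by
    intro n hn
    have h2 := (hgy n hn).2
    simp only [supp, Set.mem_setOf_eq] at *
    rw [← h2]; exact hn
  have hB'y : ∀ n ∈ B', n ∈ B.supp y := fun n hn => by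
    simp only [supp, Set.mem_setOf_eq, hB'1 n hn]; norm_num
  have key := hF f g A' B' hf (hy.subset hsg)
    (hdisj.mono_right hsg) hcard
    (by rw [Finset.disjoint_left]
        intro a ha hab
        exact Set.disjoint_left.mp hA'y (Finset.mem_coe.mpr ha) (hB'y a hab))
    (by rw [Set.disjoint_right]
        intro n hn
        simp only [Finset.coe_union, Set.mem_union, Finset.mem_coe] at hn
        intro hsup
        have hsup' := B.supp_add_subset f g hsup
        rcases hn with hn | hn
        · rcases hsup' with h | h
          · exact Set.disjoint_left.mp hA'f (Finset.mem_coe.mpr hn) h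
          · exact Set.disjoint_left.mp hA'y (Finset.mem_coe.mpr hn) (hsg h)
        · rcases hsup' with h | h
          · exact Set.disjoint_left.mp hdisj h (hB'y n hn)
          · exact (hgy n h).1 hn)
    hf1
    (by intro m n hn
        rcases hgy n hn with ⟨_, h2⟩
        rw [h2]; exact hdom m n (h2 ▸ hn))
  have heq : f + g + B.ind B' = f + y := by rw [hg]; abel
  rwa [heq] at key

lemma conv_bound (S : Finset ℕ) :
    ∀ (w z : X) (M : ℝ), (∀ n, n ∉ S → B.coord n z = 0) → (∀ n, |B.coord n z| ≤ 1) →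
    (∀ ε : ℕ → ℝ, (∀ n, ε n = 1 ∨ ε n = -1) → ‖w + ∑ n ∈ S, ε n • B.e n‖ ≤ M) →
    ‖w + z‖ ≤ M := by
  induction S using Finset.induction_on with
  | empty =>
    intro w z M hsupp _ hM
    have hz : z = 0 := B.total z fun n => hsupp n (Finset.notMem_empty n)
    have := hM (fun _ => 1) fun _ => Or.inl rfl
    simpa [hz] using this
  | @insert a S' ha ih =>
    intro w z M hsupp hbd hM
    set t := B.coord a z with ht
    have habs : |t| ≤ 1 := hbd a
    have hts := abs_le.mp habs
    have hco : ∀ n, B.coord n (z - t • B.e a)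
        = B.coord n z - t * (if n = a then 1 else 0) := by
      intro n; rw [map_sub, map_smul, smul_eq_mul, B.biorth n a]
    have key : ∀ u : X, ‖w + B.e a + u‖ ≤ M → ‖w - B.e a + u‖ ≤ M →
        ‖w + t • B.e a + u‖ ≤ M := by
      intro u h1 h2
      have hdecomp : w + t • B.e a + u
          = ((1+t)/2) • (w + B.e a + u) + ((1-t)/2) • (w - B.e a + u) := by
        match_scalars <;> ring
      rw [hdecomp]
      calc ‖((1+t)/2) • (w + B.e a + u) + ((1-t)/2) • (w - B.e a + u)‖
          ≤ ‖((1+t)/2) • (w + B.e a + u)‖ + ‖((1-t)/2) • (w - B.e a + u)‖ :=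
            norm_add_le _ _
        _ = ((1+t)/2) * ‖w + B.e a + u‖ + ((1-t)/2) * ‖w - B.e a + u‖ := by
            rw [norm_smul, norm_smul, Real.norm_eq_abs, Real.norm_eq_abs,
              abs_of_nonneg (by linarith), abs_of_nonneg (by linarith)]
        _ ≤ ((1+t)/2) * M + ((1-t)/2) * M :=
            add_le_add (mul_le_mul_of_nonneg_left h1 (by linarith))
              (mul_le_mul_of_nonneg_left h2 (by linarith))
        _ = M := by ring
    have happ := ih (w + t • B.e a) (z - t • B.e a) M
      (by intro n hn
          by_cases hna : n = a
          · subst hna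
            rw [hco n, if_pos rfl, mul_one, ht, sub_self]
          · rw [hco n, if_neg hna, mul_zero, sub_zero]
            exact hsupp n (by simp [Finset.mem_insert, hna, hn])
      )
      (by intro n
          by_cases hna : n = a
          · subst hna
            rw [hco n, if_pos rfl, mul_one, ht, sub_self]
            norm_num
          · rw [hco n, if_neg hna, mul_zero, sub_zero]
            exact hbd n
      )
      (by intro ε hε
          have hsum : ∀ c : ℝ, ∑ n ∈ insert a S', (Function.update ε a c) n • B.e n
              = c • B.e a + ∑ n ∈ S', ε n • B.e n := by
            intro c
            rw [Finset.sum_insert ha, Function.update_self]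
            congr 1
            refine Finset.sum_congr rfl fun n hn => ?_
            rw [Function.update_of_ne (show n ≠ a from fun h => ha (h ▸ hn))]
          have h1 := hM (Function.update ε a 1) (fun n => by
            by_cases h : n = a
            · subst h; rw [Function.update_self]; exact Or.inl rfl
            · rw [Function.update_of_ne h]; exact hε n)
          have h2 := hM (Function.update ε a (-1)) (fun n => by
            by_cases h : n = a
            · subst h; rw [Function.update_self]; exact Or.inr rfl
            · rw [Function.update_of_ne h]; exact hε n)
          rw [hsum 1, one_smul] at h1
          rw [hsum (-1)] at h2
          have h1' : ‖w + B.e a + ∑ n ∈ S', ε n • B.e n‖ ≤ M := by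
            have he : w + (B.e a + ∑ n ∈ S', ε n • B.e n)
                = w + B.e a + ∑ n ∈ S', ε n • B.e n := by abel
            rwa [he] at h1
          have h2' : ‖w - B.e a + ∑ n ∈ S', ε n • B.e n‖ ≤ M := by
            have he : w + ((-1:ℝ) • B.e a + ∑ n ∈ S', ε n • B.e n)
                = w - B.e a + ∑ n ∈ S', ε n • B.e n := by
              rw [neg_one_smul]; abel
            rwa [he] at h2
          exact key _ h1' h2'
      )
    calc ‖w + z‖ = ‖w + t • B.e a + (z - t • B.e a)‖ := by congr 1; abel
      _ ≤ M := happ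

end Aux

end MBasis

/-- Property (F) and Property (F*) are equivalent, with constants
`𝓕 ≤ 𝓕* ≤ 5𝓕(1 + 2𝓕 + 8𝓕²)`. -/
theorem propF_iff_propFStar
    {X : Type*} [NormedAddCommGroup X] [NormedSpace ℝ X] [CompleteSpace X]
    (B : MBasis X) :
    (∀ F : ℝ, B.PropF F → B.PropFStar (5 * F * (1 + 2 * F + 8 * F ^ 2))) ∧
    (∀ Fs : ℝ, B.PropFStar Fs → B.PropF Fs) := by
  constructor
  · -- Property (F) implies Property (F*)
    intro F hF
    -- Step 0: F ≥ 1
    have hE : ∀ i j : ℕ, i ≠ j → ‖B.e i‖ ≤ F * ‖B.e j‖ := by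
      intro i j hij
      have h := hF 0 0 {i} {j} B.finSupp_zero B.finSupp_zero
        (by rw [B.supp_zero]; exact Set.empty_disjoint _)
        (by simp)
        (Finset.disjoint_singleton.mpr hij)
        (by rw [add_zero, B.supp_zero]; exact Set.empty_disjoint _)
        (by intro n; simp)
        (by intro m n hn; simp at hn)
      simpa [MBasis.ind] using h
    have hF1 : (1:ℝ) ≤ F := by
      obtain ⟨c₁, c₂, hc₁, hc⟩ := B.semiNormalized
      have h0 : 0 < ‖B.e 0‖ := lt_of_lt_of_le hc₁ (hc 0).1
      have h1 : 0 < ‖B.e 1‖ := lt_of_lt_of_le hc₁ (hc 1).1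
      have e01 := hE 0 1 (by norm_num)
      have e10 := hE 1 0 (by norm_num)
      have hFpos : 0 < F := by nlinarith
      nlinarith [mul_le_mul e01 e10 h1.le (by positivity : (0:ℝ) ≤ F * ‖B.e 1‖),
        mul_pos h0 h1]
    intro f z y hf hz hy hfz hfy hzy hf1 hz1 hcard hdom
    set K := ‖f + y‖ with hK
    have hK0 : 0 ≤ K := norm_nonneg _
    have hFK0 : 0 ≤ F * K := mul_nonneg (by linarith) hK0
    -- basic applications of Property (F)
    have baseP : ∀ A' B' : Finset ℕ, ↑A' ⊆ B.supp z → A'.card ≤ B'.card →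
        (∀ n ∈ B', B.coord n y = 1) → ‖f + B.ind A'‖ ≤ F * K :=
      fun A' B' hsub hc h1 => B.apply_F hF f y hf hy hfy hf1 hdom A' B'
        (hfz.symm.mono_left hsub) (hzy.mono_left hsub) hc h1
    have baseN : ∀ A' B' : Finset ℕ, ↑A' ⊆ B.supp z → A'.card ≤ B'.card →
        (∀ n ∈ B', B.coord n y = -1) → ‖-f + B.ind A'‖ ≤ F * K := by
      intro A' B' hsub hc h1
      have h := B.apply_F hF (-f) (-y)
        (by rw [MBasis.FinSupp, B.supp_neg]; exact hf)
        (by rw [MBasis.FinSupp, B.supp_neg]; exact hy)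
        (by rw [B.supp_neg, B.supp_neg]; exact hfy)
        (by intro n; rw [map_neg, abs_neg]; exact hf1 n)
        (by intro m n hn
            rw [map_neg, abs_neg, map_neg, abs_neg]
            exact hdom m n (by simpa using hn))
        A' B'
        (by rw [B.supp_neg]; exact hfz.symm.mono_left hsub)
        (by rw [B.supp_neg]; exact hzy.mono_left hsub)
        hc
        (by intro n hn; rw [map_neg, h1 n hn]; norm_num)
      have he : -f + -y = -(f + y) := by abel
      rwa [he, norm_neg, ← hK] at h
    have hfK : ‖f‖ ≤ F * K := by
      have h := baseP ∅ ∅ (by simp) le_rfl (by simp)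
      simpa [MBasis.ind] using h
    -- the sets D, D⁺, D⁻ and S
    have hDfin : (B.unitSet y).Finite := hy.subset fun n hn => hn.1
    set Df := hDfin.toFinset with hDf
    set Dp := Df.filter (fun n => B.coord n y = 1) with hDp
    set Dm := Df.filter (fun n => B.coord n y = -1) with hDm
    have hDsum : Df.card ≤ Dp.card + Dm.card := by
      refine le_trans (Finset.card_le_card ?_) (Finset.card_union_le _ _)
      intro n hn
      have hn' : n ∈ B.unitSet y := (Set.Finite.mem_toFinset _).mp hn
      rcases (abs_eq (by norm_num : (0:ℝ) ≤ 1)).mp hn'.2 with h | h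
      · exact Finset.mem_union.mpr (Or.inl (Finset.mem_filter.mpr ⟨hn, h⟩))
      · exact Finset.mem_union.mpr (Or.inr (Finset.mem_filter.mpr ⟨hn, h⟩))
    set Sz := hz.toFinset with hSz
    have hSzsupp : (Sz : Set ℕ) = B.supp z := Set.Finite.coe_toFinset hz
    have hSzcard : Sz.card ≤ Df.card := by
      have h1 : (B.supp z).ncard = Sz.card := Set.ncard_eq_toFinset_card _ hz
      have h2 : (B.unitSet y).ncard = Df.card := Set.ncard_eq_toFinset_card _ hDfin
      omega
    -- bound for small sets
    have Lhalf : ∀ A' : Finset ℕ, ↑A' ⊆ B.supp z → 2 * A'.card ≤ Df.card + 1 →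
        ‖f + B.ind A'‖ ≤ 3 * (F * K) := by
      intro A' hsub hc
      by_cases hcase : Dm.card ≤ Dp.card
      · have hcc : A'.card ≤ Dp.card := by omega
        have h := baseP A' Dp hsub hcc (fun n hn => (Finset.mem_filter.mp hn).2)
        linarith
      · have hcc : A'.card ≤ Dm.card := by omega
        have h1 := baseN A' Dm hsub hcc (fun n hn => (Finset.mem_filter.mp hn).2)
        have h2 : ‖f + B.ind A'‖ ≤ ‖-f + B.ind A'‖ + ‖f + f‖ := by
          calc ‖f + B.ind A'‖ = ‖(-f + B.ind A') + (f + f)‖ := by congr 1; abel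
            _ ≤ ‖-f + B.ind A'‖ + ‖f + f‖ := norm_add_le _ _
        have h3 : ‖f + f‖ ≤ ‖f‖ + ‖f‖ := norm_add_le _ _
        linarith
    -- bound for sets of size ≤ |D|
    have Lfull : ∀ A' : Finset ℕ, ↑A' ⊆ B.supp z → A'.card ≤ Df.card →
        ‖f + B.ind A'‖ ≤ 7 * (F * K) := by
      intro A' hsub hc
      obtain ⟨A₁, hA₁sub, hA₁card⟩ :=
        Finset.exists_subset_card_eq (show (A'.card + 1)/2 ≤ A'.card by omega)
      set A₂ := A' \ A₁ with hA₂
      have hA₂card : A₂.card = A'.card - (A'.card+1)/2 := by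
        rw [hA₂, Finset.card_sdiff_of_subset hA₁sub, hA₁card]
      have hind : B.ind A' = B.ind A₁ + B.ind A₂ := by
        rw [MBasis.ind, MBasis.ind, MBasis.ind, hA₂,
          ← Finset.sum_union Finset.disjoint_sdiff, Finset.union_sdiff_of_subset hA₁sub]
      have h1 := Lhalf A₁ ((Finset.coe_subset.mpr hA₁sub).trans hsub) (by omega)
      have h2 := Lhalf A₂ ((Finset.coe_subset.mpr Finset.sdiff_subset).trans hsub) (by omega)
      have h3 : ‖B.ind A₂‖ ≤ ‖f + B.ind A₂‖ + ‖f‖ := by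
        calc ‖B.ind A₂‖ = ‖(f + B.ind A₂) - f‖ := by congr 1; abel
          _ ≤ ‖f + B.ind A₂‖ + ‖f‖ := norm_sub_le _ _
      have h4 : ‖f + B.ind A'‖ ≤ ‖f + B.ind A₁‖ + ‖B.ind A₂‖ := by
        rw [hind, ← add_assoc]; exact norm_add_le _ _
      linarith
    -- bound for sign vectors
    have Lsign : ∀ ε : ℕ → ℝ, (∀ n, ε n = 1 ∨ ε n = -1) →
        ‖f + ∑ n ∈ Sz, ε n • B.e n‖ ≤ 15 * (F * K) := by
      intro ε hε
      set Sp := Sz.filter (fun n => ε n = 1) with hSp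
      set Sm := Sz.filter (fun n => ¬ ε n = 1) with hSm
      have hsplit : ∑ n ∈ Sz, ε n • B.e n = B.ind Sp - B.ind Sm := by
        rw [← Finset.sum_filter_add_sum_filter_not Sz (fun n => ε n = 1)]
        rw [MBasis.ind, MBasis.ind, sub_eq_add_neg, ← Finset.sum_neg_distrib]
        congr 1
        · exact Finset.sum_congr rfl fun n hn => by
            rw [(Finset.mem_filter.mp hn).2, one_smul]
        · exact Finset.sum_congr rfl fun n hn => by
            rcases hε n with h | h
            · exact absurd h (Finset.mem_filter.mp hn).2
            · rw [h, neg_one_smul]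
      have hSpsub : (Sp : Set ℕ) ⊆ B.supp z := by
        rw [← hSzsupp]; exact Finset.coe_subset.mpr (Finset.filter_subset _ _)
      have hSmsub : (Sm : Set ℕ) ⊆ B.supp z := by
        rw [← hSzsupp]; exact Finset.coe_subset.mpr (Finset.filter_subset _ _)
      have h1 := Lfull Sp hSpsub ((Finset.card_filter_le _ _).trans hSzcard)
      have h2 := Lfull Sm hSmsub ((Finset.card_filter_le _ _).trans hSzcard)
      have h3 : ‖B.ind Sm‖ ≤ ‖f + B.ind Sm‖ + ‖f‖ := by
        calc ‖B.ind Sm‖ = ‖(f + B.ind Sm) - f‖ := by congr 1; abel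
          _ ≤ ‖f + B.ind Sm‖ + ‖f‖ := norm_sub_le _ _
      have h4 : ‖f + (B.ind Sp - B.ind Sm)‖ ≤ ‖f + B.ind Sp‖ + ‖B.ind Sm‖ := by
        calc ‖f + (B.ind Sp - B.ind Sm)‖ = ‖(f + B.ind Sp) - B.ind Sm‖ := by congr 1; abel
          _ ≤ ‖f + B.ind Sp‖ + ‖B.ind Sm‖ := norm_sub_le _ _
      rw [hsplit]
      linarith
    have main := B.conv_bound Sz f z (15 * (F * K))
      (fun n hn => by
        by_contra h
        exact hn ((Set.Finite.mem_toFinset hz).mpr h))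
      hz1 Lsign
    calc ‖f + z‖ ≤ 15 * (F * K) := main
      _ ≤ 5 * F * (1 + 2 * F + 8 * F ^ 2) * ‖f + y‖ := by
          rw [← hK]
          nlinarith [mul_nonneg (mul_nonneg (by linarith : (0:ℝ) ≤ F) hK0)
            (by linarith : (0:ℝ) ≤ F - 1),
            mul_nonneg (mul_nonneg (mul_nonneg (by linarith : (0:ℝ) ≤ F)
              (by linarith : (0:ℝ) ≤ F)) (by linarith : (0:ℝ) ≤ F)) hK0]
  · -- Property (F*) implies Property (F)
    intro Fs hFs
    intro f g A B' hf hg hfg hcard hAB hdisj hf1 hdom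
    have hsuppfg : B.supp (f + g) = B.supp f ∪ B.supp g := by
      apply Set.Subset.antisymm (B.supp_add_subset f g)
      rintro n (hn | hn)
      · have hg0 : B.coord n g = 0 := by
          by_contra h; exact Set.disjoint_left.mp hfg hn h
        show B.coord n (f + g) ≠ 0
        rw [map_add, hg0, add_zero]; exact hn
      · have hf0 : B.coord n f = 0 := by
          by_contra h; exact Set.disjoint_left.mp hfg h hn
        show B.coord n (f + g) ≠ 0
        rw [map_add, hf0, zero_add]; exact hn
    rw [hsuppfg] at hdisj
    have hfA : Disjoint (B.supp f) ((A : Set ℕ)) :=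
      (hdisj.mono_left Set.subset_union_left).mono_right
        (by rw [Finset.coe_union]; exact Set.subset_union_left)
    have hfB' : Disjoint (B.supp f) ((B' : Set ℕ)) :=
      (hdisj.mono_left Set.subset_union_left).mono_right
        (by rw [Finset.coe_union]; exact Set.subset_union_right)
    have hgA : Disjoint (B.supp g) ((A : Set ℕ)) :=
      (hdisj.mono_left Set.subset_union_right).mono_right
        (by rw [Finset.coe_union]; exact Set.subset_union_left)
    have hgB' : Disjoint (B.supp g) ((B' : Set ℕ)) :=
      (hdisj.mono_left Set.subset_union_right).mono_right
        (by rw [Finset.coe_union]; exact Set.subset_union_right)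
    set y := g + B.ind B' with hy
    have hcy : ∀ n, B.coord n y = B.coord n g + (if n ∈ B' then 1 else 0) := by
      intro n; rw [hy, map_add, B.coord_ind_s8]
    have hgB'0 : ∀ n ∈ B', B.coord n g = 0 := by
      intro n hn
      by_contra h
      exact Set.disjoint_left.mp hgB' h (Finset.mem_coe.mpr hn)
    have hcyB' : ∀ n ∈ B', B.coord n y = 1 := by
      intro n hn; rw [hcy n, hgB'0 n hn, if_pos hn, zero_add]
    have hcyNB' : ∀ n, n ∉ B' → B.coord n y = B.coord n g := by
      intro n hn; rw [hcy n, if_neg hn, add_zero]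
    have hsy : B.supp y = B.supp g ∪ ↑B' := by
      ext n
      constructor
      · intro hn
        by_cases h : n ∈ B'
        · exact Or.inr (Finset.mem_coe.mpr h)
        · left
          show B.coord n g ≠ 0
          rw [← hcyNB' n h]; exact hn
      · rintro (hn | hn)
        · show B.coord n y ≠ 0
          rw [hcyNB' n (fun h => Set.disjoint_left.mp hgB' hn (Finset.mem_coe.mpr h))]
          exact hn
        · show B.coord n y ≠ 0
          rw [hcyB' n (Finset.mem_coe.mp hn)]; norm_num
    have hyfin : B.FinSupp y := by
      rw [MBasis.FinSupp, hsy]; exact hg.union B'.finite_toSet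
    have hunit : (B' : Set ℕ) ⊆ B.unitSet y := by
      intro n hn
      have h1 := hcyB' n (Finset.mem_coe.mp hn)
      exact ⟨by rw [h1]; norm_num, by rw [h1]; norm_num⟩
    have hunitfin : (B.unitSet y).Finite := hyfin.subset fun n hn => hn.1
    have hkey := hFs f (B.ind A) y hf (B.finSupp_ind A) hyfin
      (by rw [B.supp_ind]; exact hfA)
      (by rw [hsy]; exact Set.disjoint_union_right.mpr ⟨hfg, hfB'⟩)
      (by rw [B.supp_ind, hsy]
          exact Set.disjoint_union_right.mpr ⟨hgA.symm, by
            rw [Set.disjoint_left]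
            intro a ha hb
            exact Finset.disjoint_left.mp hAB (Finset.mem_coe.mp ha) (Finset.mem_coe.mp hb)⟩)
      hf1
      (by intro n; rw [B.coord_ind_s8]; split <;> norm_num)
      (by rw [B.supp_ind, Set.ncard_coe_finset]
          calc A.card ≤ B'.card := hcard
            _ = ((B' : Set ℕ)).ncard := (Set.ncard_coe_finset B').symm
            _ ≤ (B.unitSet y).ncard := Set.ncard_le_ncard hunit hunitfin)
      (by intro m n hn
          by_cases h : n ∈ B'
          · rw [hcyB' n h]; simpa using hf1 m
          · rw [hcyNB' n h] at hn ⊢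
            exact hdom m n hn)
    calc ‖f + B.ind A‖ ≤ Fs * ‖f + y‖ := hkey
      _ = Fs * ‖f + g + B.ind B'‖ := by rw [hy, add_assoc]
end
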